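/- arXiv:2104.02266 — 6 statements merged into one kernel-verified Lean document; each statement's English description precedes it below -/
import Mathlib

section
/- For any tree T of order n, the maximum weight of a boundary independent broadcast on T satisfies α_bn(T) ≤ n - b(T) + ρ(T), where b(T) is the number of branch vertices and ρ(T) is the number of branch vertices belonging to at most one endpath. -/
open SimpleGraph Finset
open scoped Classical

noncomputable section

/-- Eccentricity of a vertex. -/
def gecc {V : Type*} (G : SimpleGraph V) [Fintype V] (v : V) : ℕ :=
  Finset.univ.sup fun u => G.dist v u

/-- A broadcast: `f v ≤ e(v)` for all `v`. -/
def IsBroadcast {V : Type*} (G : SimpleGraph V) [Fintype V] (f : V → ℕ) : Prop :=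
  ∀ v, f v ≤ gecc G v

/-- `u` hears `f` from `v`. -/
def Hears {V : Type*} (G : SimpleGraph V) (f : V → ℕ) (u v : V) : Prop :=
  0 < f v ∧ G.dist u v ≤ f v

/-- Boundary independent broadcast: a vertex hearing two or more broadcasting
vertices lies in the boundary of each. -/
def BnIndep {V : Type*} (G : SimpleGraph V) [Fintype V] (f : V → ℕ) : Prop :=
  IsBroadcast G f ∧
    ∀ w v₁ v₂, v₁ ≠ v₂ → Hears G f w v₁ → Hears G f w v₂ → G.dist w v₁ = f v₁

/-- Weight of a broadcast. -/
def bweight {V : Type*} [Fintype V] (f : V → ℕ) : ℕ := ∑ v, f v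

/-- The boundary independence number. -/
def alphaBn {V : Type*} (G : SimpleGraph V) [Fintype V] : ℕ :=
  sSup {w | ∃ f, BnIndep G f ∧ bweight f = w}

/-- Set of branch vertices (degree at least 3). -/
def branchSet {V : Type*} (G : SimpleGraph V) [Fintype V] : Finset V :=
  Finset.univ.filter fun v => 3 ≤ G.degree v

/-- `l` is a leaf joined to `v` by an endpath (all internal vertices of degree 2). -/
def IsEndpathTo {V : Type*} (G : SimpleGraph V) [Fintype V] (v l : V) : Prop :=
  G.degree l = 1 ∧ ∃ p : G.Walk v l, p.IsPath ∧
    ∀ u ∈ p.support, u ≠ v → u ≠ l → G.degree u = 2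

/-- Leaf set `L(v)` of a vertex `v`. -/
def leafSet {V : Type*} (G : SimpleGraph V) [Fintype V] (v : V) : Finset V :=
  Finset.univ.filter fun l => IsEndpathTo G v l

/-- `R(T)`: branch vertices with at most one leaf in their leaf set. -/
def rset {V : Type*} (G : SimpleGraph V) [Fintype V] : Finset V :=
  (branchSet G).filter fun v => (leafSet G v).card ≤ 1

/-- Edge `uv` is covered by broadcasting vertex `x`. -/
def Covers {V : Type*} (G : SimpleGraph V) (f : V → ℕ) (x u v : V) : Prop :=
  0 < f x ∧ G.Adj u v ∧ G.dist u x ≤ f x ∧ G.dist v x ≤ f x ∧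
    (G.dist u x < f x ∨ G.dist v x < f x)

/-- The graph `G - U_f^E` obtained by deleting all `f`-uncovered edges. -/
def coveredSubgraph {V : Type*} (G : SimpleGraph V) (f : V → ℕ) : SimpleGraph V where
  Adj u v := G.Adj u v ∧ ∃ x, Covers G f x u v
  symm := by
    constructor
    rintro u v ⟨h, x, h1, h2, h3, h4, h5⟩
    exact ⟨h.symm, x, h1, h2.symm, h4, h3, h5.symm⟩
  loopless := by constructor; rintro u ⟨h, -⟩; exact G.loopless.irrefl u h

/-- `f` is a maximal bn-independent broadcast. -/
def MaximalBn {V : Type*} (G : SimpleGraph V) [Fintype V] (f : V → ℕ) : Prop :=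
  BnIndep G f ∧ ∀ g, BnIndep G g → (∀ v, f v ≤ g v) → g = f

/-- The `f`-private boundary of `v`: vertices of `N_f(v)` not dominated once the
broadcast strength of `v` is lowered by one. -/
def privBoundary {V : Type*} (G : SimpleGraph V) (f : V → ℕ) (v : V) : Set V :=
  {u | G.dist u v ≤ f v ∧ ∀ x, ¬ Hears G (Function.update f v (f v - 1)) u x}

/-- The branch representation: branch vertices adjacent iff the path between them
contains no other branch vertex. -/
def branchRep {V : Type*} (G : SimpleGraph V) [Fintype V] : SimpleGraph V where
  Adj b₁ b₂ := b₁ ≠ b₂ ∧ 3 ≤ G.degree b₁ ∧ 3 ≤ G.degree b₂ ∧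
    ∀ p : G.Walk b₁ b₂, p.IsPath → ∀ u ∈ p.support, 3 ≤ G.degree u → u = b₁ ∨ u = b₂
  symm := by
    constructor
    rintro a b ⟨hab, ha, hb, h⟩
    refine ⟨hab.symm, hb, ha, fun p hp u hu hdeg => ?_⟩
    have hu' : u ∈ p.reverse.support := by
      rw [SimpleGraph.Walk.support_reverse]; exact List.mem_reverse.mpr hu
    exact (h p.reverse hp.reverse u hu' hdeg).symm
  loopless := by constructor; rintro v ⟨h, -⟩; exact h rfl

/-- Hearing independent broadcast. -/
def HIndep {V : Type*} (G : SimpleGraph V) [Fintype V] (f : V → ℕ) : Prop :=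
  IsBroadcast G f ∧ ∀ u v, u ≠ v → 0 < f u → 0 < f v → f v < G.dist u v

/-- The hearing independence number. -/
def alphaH {V : Type*} (G : SimpleGraph V) [Fintype V] : ℕ :=
  sSup {w | ∃ f, HIndep G f ∧ bweight f = w}

/-- Diameter. -/
def gdiam {V : Type*} (G : SimpleGraph V) [Fintype V] : ℕ :=
  Finset.univ.sup fun v => gecc G v

/-!
Fix a bn-independent broadcast `f`. The open balls `{u | d(u, x) < f(x)}` of the broadcasting
vertices are pairwise disjoint, and since `f(x) ≤ e(x)` the ball of `x` contains the first `f(x)`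
vertices of a path leaving `x`; each of them is `x` itself or has degree at least two. This
accounts for `σ(f)` vertices. Every branch vertex `v` with `|L(v)| ≥ 2` supplies one more vertex on
one of its endpaths: a vertex in no open ball if the two endpaths through leaves `l₁ ≠ l₂` contain
one, and otherwise the walk `l₁ → v → l₂` stays inside a single ball (two balls could only meet on
boundaries), so one of `l₁, l₂` is a leaf inside the ball of some other vertex. Neither kind of
vertex was counted before, and endpaths of distinct branch vertices are disjoint, so
`σ(f) + b(T) - ρ(T) ≤ n`.
-/

namespace SimpleGraph

variable {V : Type*} {G : SimpleGraph V}

lemma Walk.dist_getVert_le {u v : V} (p : G.Walk u v) (i : ℕ) : G.dist u (p.getVert i) ≤ i :=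
  (dist_le (p.take i)).trans (by simp [Walk.take_length])

lemma Connected.exists_isPath_le_length [Fintype V] (hc : G.Connected) {x : V} {k : ℕ}
    (hk : k ≤ gecc G x) : ∃ (z : V) (p : G.Walk x z), p.IsPath ∧ k ≤ p.length := by
  have : Nonempty V := hc.nonempty
  obtain ⟨z, -, hz⟩ := Finset.exists_mem_eq_sup univ univ_nonempty (G.dist x)
  obtain ⟨p, hp⟩ := hc.exists_walk_length_eq_dist x z
  exact ⟨z, p, p.isPath_of_length_eq_dist hp, by rwa [hp, ← hz]⟩

variable [Fintype V]

lemma eq_or_eq_or_eq_of_degree_eq_two {w x y z : V} (hw : G.degree w = 2) (hx : G.Adj w x)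
    (hy : G.Adj w y) (hz : G.Adj w z) : x = y ∨ x = z ∨ y = z := by
  by_contra! hne
  obtain ⟨hxy, hxz, hyz⟩ := hne
  have hsub : ({x, y, z} : Finset V) ⊆ G.neighborFinset w := by
    intro a ha
    simp only [mem_insert, mem_singleton] at ha
    rcases ha with rfl | rfl | rfl <;> simpa
  have := card_le_card hsub
  rw [card_neighborFinset_eq_degree, hw, card_eq_three.mpr ⟨x, y, z, hxy, hxz, hyz, rfl⟩] at this
  omega

namespace Walk

lemma IsPath.two_le_degree_getVert {u v : V} {p : G.Walk u v} (hp : p.IsPath) {i : ℕ}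
    (hi₀ : 0 < i) (hi : i < p.length) : 2 ≤ G.degree (p.getVert i) := by
  have hprev : G.Adj (p.getVert i) (p.getVert (i - 1)) := by
    simpa [Nat.sub_add_cancel hi₀] using (p.adj_getVert_succ (i := i - 1) (by omega)).symm
  have hnext : G.Adj (p.getVert i) (p.getVert (i + 1)) := p.adj_getVert_succ hi
  have hne : p.getVert (i - 1) ≠ p.getVert (i + 1) := fun h => by
    have := hp.getVert_injOn (by simp only [Set.mem_ofPred_eq]; omega)
      (by simp only [Set.mem_ofPred_eq]; omega) h
    omega
  rw [← card_neighborFinset_eq_degree]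
  exact one_lt_card.mpr ⟨_, by simpa using hprev, _, by simpa using hnext, hne⟩

lemma IsPath.getVert_eq_start_or_two_le_degree {u v : V} {p : G.Walk u v} (hp : p.IsPath)
    {i : ℕ} (hi : i < p.length) : p.getVert i = u ∨ 2 ≤ G.degree (p.getVert i) := by
  rcases Nat.eq_zero_or_pos i with rfl | hi₀
  · exact .inl p.getVert_zero
  · exact .inr (hp.two_le_degree_getVert hi₀ hi)

def IsBarePath {u v : V} (p : G.Walk u v) : Prop :=
  p.IsPath ∧ ∀ w ∈ p.support, w ≠ u → w ≠ v → G.degree w = 2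

def IsEndpath {v l : V} (p : G.Walk v l) : Prop :=
  p.IsBarePath ∧ G.degree l = 1

lemma _root_.IsEndpathTo.exists_isEndpath {v l : V} (h : IsEndpathTo G v l) :
    ∃ p : G.Walk v l, p.IsEndpath :=
  let ⟨hl, p, hp⟩ := h
  ⟨p, hp, hl⟩

lemma IsBarePath.reverse {u v : V} {p : G.Walk u v} (hp : p.IsBarePath) :
    p.reverse.IsBarePath :=
  ⟨hp.1.reverse, fun w hw hwv hwu => hp.2 w (by simpa using hw) hwu hwv⟩

lemma IsBarePath.of_cons {u v w : V} {h : G.Adj u v} {p : G.Walk v w}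
    (hp : (cons h p).IsBarePath) : p.IsBarePath := by
  have hu : u ∉ p.support := ((cons_isPath_iff h p).mp hp.1).2
  exact ⟨hp.1.of_cons, fun x hx hxv hxw =>
    hp.2 x (by simp [hx]) (by rintro rfl; exact hu hx) hxw⟩

lemma IsBarePath.takeUntil {u v w : V} {p : G.Walk u v} (hp : p.IsBarePath)
    (hw : w ∈ p.support) : (p.takeUntil w hw).IsBarePath :=
  ⟨hp.1.takeUntil hw, fun x hx hxu hxw => hp.2 x (support_takeUntil_subset_support p hw hx) hxu
    (by rintro rfl; exact endpoint_notMem_support_takeUntil hp.1 hw hxw hx)⟩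

lemma IsBarePath.eq_of_snd_eq {a b₁ b₂ : V} {r : G.Walk a b₁} {s : G.Walk a b₂}
    (hr : r.IsBarePath) (hs : s.IsBarePath) (hb₁ : G.degree b₁ ≠ 2) (hb₂ : G.degree b₂ ≠ 2)
    (h : r.snd = s.snd) : b₁ = b₂ := by
  induction r with
  | nil =>
    cases s with
    | nil => rfl
    | cons hadj _ => exact (hadj.ne (by simpa using h)).elim
  | @cons a w b₁ hadj r ih =>
    cases s with
    | nil => exact (hadj.ne (by simpa using h.symm)).elim
    | cons hadj' s =>
      obtain rfl : w = _ := by simpa using h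
      by_cases hw : G.degree w = 2
      · have hwb₁ : w ≠ b₁ := by rintro rfl; exact hb₁ hw
        have hwb₂ : w ≠ b₂ := by rintro rfl; exact hb₂ hw
        have har : a ∉ r.support := ((cons_isPath_iff hadj r).mp hr.1).2
        have has : a ∉ s.support := ((cons_isPath_iff hadj' s).mp hs.1).2
        have hsnd := eq_or_eq_or_eq_of_degree_eq_two hw hadj.symm
          (adj_snd (p := r) (not_nil_of_ne hwb₁)) (adj_snd (p := s) (not_nil_of_ne hwb₂))
        refine ih hr.of_cons hs.of_cons hb₁ (hsnd.resolve_left ?_ |>.resolve_left ?_)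
        · exact fun h => har (h ▸ getVert_mem_support r 1)
        · exact fun h => has (h ▸ getVert_mem_support s 1)
      · have hwb₁ : w = b₁ := by_contra fun hne => hw (hr.2 w (by simp) hadj.ne' hne)
        have hwb₂ : w = b₂ := by_contra fun hne => hw (hs.2 w (by simp) hadj.ne' hne)
        exact hwb₁.symm.trans hwb₂

lemma IsEndpath.start_eq_start {v v' l : V} {p : G.Walk v l} {q : G.Walk v' l}
    (hp : p.IsEndpath) (hq : q.IsEndpath) (hv : 3 ≤ G.degree v) (hv' : 3 ≤ G.degree v') :
    v = v' := by
  have hvl : v ≠ l := by rintro rfl; have := hp.2; omega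
  have hv'l : v' ≠ l := by rintro rfl; have := hp.2; omega
  refine hp.1.reverse.eq_of_snd_eq hq.1.reverse (by omega) (by omega) ?_
  exact (degree_eq_one_iff_existsUnique_adj.mp hp.2).unique (adj_snd (not_nil_of_ne hvl.symm))
    (adj_snd (not_nil_of_ne hv'l.symm))

lemma IsEndpath.start_eq_start_of_mem_support {v v' l l' u : V} {p : G.Walk v l}
    {q : G.Walk v' l'} (hp : p.IsEndpath) (hq : q.IsEndpath) (hv : 3 ≤ G.degree v)
    (hv' : 3 ≤ G.degree v') (hu : u ∈ p.support) (hu' : u ∈ q.support) : v = v' := by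
  have hl := hp.2
  have hl' := hq.2
  by_cases hu₂ : G.degree u = 2
  · have huv : u ≠ v := by rintro rfl; omega
    have hul : u ≠ l := by rintro rfl; omega
    have huv' : u ≠ v' := by rintro rfl; omega
    obtain ⟨r, hr⟩ : ∃ r : G.Walk u v, r.IsBarePath := ⟨_, (hp.1.takeUntil hu).reverse⟩
    obtain ⟨s, hs⟩ : ∃ s : G.Walk u l, s.IsBarePath :=
      ⟨_, (hp.1.reverse.takeUntil (by simpa using hu)).reverse⟩
    obtain ⟨t, ht⟩ : ∃ t : G.Walk u v', t.IsBarePath := ⟨_, (hq.1.takeUntil hu').reverse⟩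
    rcases eq_or_eq_or_eq_of_degree_eq_two hu₂ (adj_snd (p := r) (not_nil_of_ne huv))
      (adj_snd (p := s) (not_nil_of_ne hul)) (adj_snd (p := t) (not_nil_of_ne huv'))
      with h | h | h
    · obtain rfl := hr.eq_of_snd_eq hs (by omega) (by omega) h
      omega
    · exact hr.eq_of_snd_eq ht (by omega) (by omega) h
    · obtain rfl := hs.eq_of_snd_eq ht (by omega) (by omega) h
      omega
  · have hpu : u = v ∨ u = l := by
      by_contra! h
      exact hu₂ (hp.1.2 u hu h.1 h.2)
    have hqu : u = v' ∨ u = l' := by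
      by_contra! h
      exact hu₂ (hq.1.2 u hu' h.1 h.2)
    rcases hpu with rfl | rfl <;> rcases hqu with rfl | rfl
    · rfl
    · omega
    · omega
    · exact hp.start_eq_start hq hv hv'

end Walk

end SimpleGraph

namespace BnIndep

variable {V : Type*} [Fintype V] {G : SimpleGraph V} {f : V → ℕ}

lemma eq_of_dist_lt (hf : BnIndep G f) {u x y : V} (hx : G.dist u x < f x)
    (hy : G.dist u y < f y) : x = y := by
  by_contra hxy
  have := hf.2 u x y hxy ⟨by omega, hx.le⟩ ⟨by omega, hy.le⟩
  omega

lemma dist_lt_of_walk (hc : G.Connected) (hf : BnIndep G f) {x s t : V} (p : G.Walk s t)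
    (hp : ∀ u ∈ p.support, ∃ y, G.dist u y < f y) (hs : G.dist s x < f x) :
    G.dist t x < f x := by
  induction p with
  | nil => exact hs
  | @cons s b t hadj q ih =>
    refine ih (fun u hu => hp u (by simp [hu])) ?_
    obtain ⟨y, hy⟩ := hp b (by simp)
    have hbx : G.dist b x ≤ f x := by
      have := hc.dist_triangle (u := b) (v := s) (w := x)
      rw [dist_eq_one_iff_adj.mpr hadj.symm] at this
      omega
    -- `b` hears `x`, so bn-independence forbids it to lie strictly inside another ball
    obtain rfl : y = x := by
      by_contra hyx
      have := hf.2 b y x hyx ⟨by omega, hy.le⟩ ⟨by omega, hbx⟩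
      omega
    exact hy

lemma exists_mem_endpath (hc : G.Connected) (hf : BnIndep G f) {v : V}
    (hv : 1 < (leafSet G v).card) :
    ∃ u, (∃ (l : V) (p : G.Walk v l), p.IsEndpath ∧ u ∈ p.support) ∧
      ∀ x, G.dist u x < f x → u ≠ x ∧ G.degree u = 1 := by
  obtain ⟨l₁, hl₁, l₂, hl₂, hl₁₂⟩ := one_lt_card.mp hv
  obtain ⟨p₁, hp₁⟩ := (mem_filter.mp hl₁).2.exists_isEndpath
  obtain ⟨p₂, hp₂⟩ := (mem_filter.mp hl₂).2.exists_isEndpath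
  by_cases hcov : ∀ u ∈ (p₁.reverse.append p₂).support, ∃ y, G.dist u y < f y
  · obtain ⟨x, hx₁⟩ := hcov l₁ (Walk.start_mem_support _)
    have hx₂ := hf.dist_lt_of_walk hc _ hcov hx₁
    obtain ⟨l, p, hp, hlx, hne⟩ :
        ∃ (l : V) (p : G.Walk v l), p.IsEndpath ∧ G.dist l x < f x ∧ l ≠ x := by
      rcases eq_or_ne l₁ x with rfl | hne
      · exact ⟨l₂, p₂, hp₂, hx₂, hl₁₂.symm⟩
      · exact ⟨l₁, p₁, hp₁, hx₁, hne⟩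
    exact ⟨l, ⟨l, p, hp, p.end_mem_support⟩, fun y hy => ⟨hf.eq_of_dist_lt hlx hy ▸ hne, hp.2⟩⟩
  · obtain ⟨u, hu, hunc⟩ := not_forall₂.mp hcov
    refine ⟨u, ?_, fun x hx => (hunc ⟨x, hx⟩).elim⟩
    rcases (Walk.mem_support_append_iff _ _).mp hu with hu | hu
    · exact ⟨l₁, p₁, hp₁, by simpa using hu⟩
    · exact ⟨l₂, p₂, hp₂, hu⟩

theorem bweight_add_card_sdiff_le (hc : G.Connected) (hf : BnIndep G f) :
    bweight f + (branchSet G \ rset G).card ≤ Fintype.card V := by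
  choose z P hP hfP using fun x => hc.exists_isPath_le_length (hf.1 x)
  have hpath_dist (x : V) (i : Fin (f x)) : G.dist ((P x).getVert i) x < f x :=
    dist_comm (G := G) ▸ ((P x).dist_getVert_le i).trans_lt i.2
  have hheavy (v : ↥(branchSet G \ rset G)) : 3 ≤ G.degree v ∧ 1 < (leafSet G v).card := by
    obtain ⟨hb, hr⟩ := mem_sdiff.mp v.2
    exact ⟨(mem_filter.mp hb).2, by simpa [rset, hb] using hr⟩
  choose S hS hSx using fun v => hf.exists_mem_endpath hc (hheavy v).2
  have hpath_ne (x : V) (i : Fin (f x)) (v) : (P x).getVert i ≠ S v := fun h => by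
    obtain ⟨hne, hdeg⟩ := hSx v x (h ▸ hpath_dist x i)
    rcases (hP x).getVert_eq_start_or_two_le_degree (i.2.trans_le (hfP x)) with h' | h' <;>
      rw [h] at h'
    · exact hne h'
    · omega
  let F : (Σ x, Fin (f x)) ⊕ ↥(branchSet G \ rset G) → V :=
    Sum.elim (fun xi => (P xi.1).getVert xi.2) S
  have hF : F.Injective := by
    rintro (⟨x, i⟩ | v) (⟨y, j⟩ | w) h <;> simp only [F, Sum.elim_inl, Sum.elim_inr] at h
    · obtain rfl : x = y := hf.eq_of_dist_lt (h ▸ hpath_dist x i) (hpath_dist y j)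
      have hlen := hfP x
      obtain rfl : i = j := Fin.ext <| (hP x).getVert_injOn
        (show (i : ℕ) ≤ _ by omega) (show (j : ℕ) ≤ _ by omega) h
      rfl
    · exact (hpath_ne x i w h).elim
    · exact (hpath_ne y j v h.symm).elim
    · obtain ⟨l, p, hp, hmem⟩ := hS v
      obtain ⟨l', q, hq, hmem'⟩ := hS w
      exact congrArg Sum.inr <| Subtype.ext <| hp.start_eq_start_of_mem_support hq
        (hheavy v).1 (hheavy w).1 hmem (h ▸ hmem')
  simpa only [bweight, Fintype.card_sum, Fintype.card_sigma, Fintype.card_fin,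
    Fintype.card_coe] using Fintype.card_le_of_injective F hF

end BnIndep

/-- For any tree `T` of order `n`, `α_bn(T) ≤ n - b(T) + ρ(T)`. -/
theorem stmt0 {V : Type*} [Fintype V] (T : SimpleGraph V) (hT : T.IsTree) :
    alphaBn T ≤ Fintype.card V - (branchSet T).card + (rset T).card := by
  refine csSup_le' ?_
  rintro _ ⟨f, hf, rfl⟩
  have hcount := hf.bweight_add_card_sdiff_le hT.connected
  have hsub : rset T ⊆ branchSet T := filter_subset _ _
  rw [card_sdiff_of_subset hsub] at hcount
  have := card_le_card hsub
  omega
end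
end

section
/- For any connected graph G of order n and any spanning tree T of G, α_bn(G) ≤ α_bn(T) ≤ n − 1. -/
open SimpleGraph Finset
open scoped Classical

noncomputable section

/-! The balls of radius `f v - 1` around the broadcasting vertices are pairwise disjoint by
bn-independence, the ball around `v` contains a vertex at each distance `0, …, f v - 1` from `v`
because `f v ≤ e(v)`, and a vertex at distance exactly `f v₀` from some broadcasting `v₀` lies in
none of them. Hence `σ(f) ≤ n - 1` on every graph. On a spanning tree distances can only grow,
so a bn-independent broadcast on `G` stays bn-independent on `T`. -/

namespace SimpleGraph

variable {V : Type*} {G T : SimpleGraph V} {f : V → ℕ}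

lemma exists_dist_eq_of_le_dist {u v : V} {k : ℕ} (hk : k ≤ G.dist v u) :
    ∃ w, G.dist v w = k := by
  rcases Nat.eq_zero_or_pos (G.dist v u) with h | h
  · exact ⟨v, by rw [dist_self]; omega⟩
  obtain ⟨p, hp⟩ := (Reachable.of_dist_ne_zero h.ne').exists_walk_length_eq_dist
  refine ⟨p.getVert k, ?_⟩
  have := length_eq_dist_of_subwalk hp (p.isSubwalk_take k)
  simp only [Walk.take_length] at this
  omega

variable [Fintype V]

lemma exists_dist_eq_of_le_gecc {v : V} {k : ℕ} (hk : k ≤ gecc G v) : ∃ w, G.dist v w = k := by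
  obtain ⟨u, -, hu⟩ := Finset.exists_mem_eq_sup univ ⟨v, mem_univ v⟩ (G.dist v)
  exact exists_dist_eq_of_le_dist (u := u) (hu ▸ hk)

lemma gecc_le_gecc_of_le (hT : T.Connected) (hle : T ≤ G) (v : V) : gecc G v ≤ gecc T v :=
  Finset.sup_mono_fun fun u _ => (hT v u).dist_anti hle

/-- Empty when `f v = 0`, so sums and unions over these balls may run over all vertices. -/
def innerBall (G : SimpleGraph V) (f : V → ℕ) (v : V) : Finset V :=
  univ.filter fun w => G.dist w v < f v

lemma mem_innerBall {v w : V} : w ∈ innerBall G f v ↔ G.dist w v < f v := by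
  simp [innerBall]

lemma le_card_innerBall (hf : IsBroadcast G f) (v : V) : f v ≤ #(innerBall G f v) := by
  have hsurj : Set.SurjOn (G.dist v) (innerBall G f v) (range (f v)) := by
    intro k hk
    obtain ⟨w, hw⟩ := exists_dist_eq_of_le_gecc ((mem_range.mp hk).le.trans (hf v))
    exact ⟨w, mem_innerBall.mpr (by rw [dist_comm, hw]; exact mem_range.mp hk), hw⟩
  simpa using card_le_card_of_surjOn _ hsurj

lemma BnIndep.disjoint_innerBall (hf : BnIndep G f) {v₁ v₂ : V} (hne : v₁ ≠ v₂) :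
    Disjoint (innerBall G f v₁) (innerBall G f v₂) := by
  refine Finset.disjoint_left.mpr fun w hw₁ hw₂ => ?_
  rw [mem_innerBall] at hw₁ hw₂
  have := hf.2 w v₁ v₂ hne ⟨by omega, hw₁.le⟩ ⟨by omega, hw₂.le⟩
  omega

lemma BnIndep.notMem_innerBall (hf : BnIndep G f) {v₀ b : V} (hpos : 0 < f v₀)
    (hb : G.dist v₀ b = f v₀) (v : V) : b ∉ innerBall G f v := by
  rw [mem_innerBall]
  intro hbv
  by_cases hv : v = v₀
  · subst hv
    rw [dist_comm] at hbv
    omega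
  · have := hf.2 b v v₀ hv ⟨by omega, hbv.le⟩ ⟨hpos, by rw [dist_comm, hb]⟩
    omega

lemma BnIndep.bweight_le_card_sub_one (hf : BnIndep G f) : bweight f ≤ Fintype.card V - 1 := by
  by_cases hzero : ∀ v, f v = 0
  · simp [bweight, hzero]
  push Not at hzero
  obtain ⟨v₀, hv₀⟩ := hzero
  obtain ⟨b, hb⟩ := exists_dist_eq_of_le_gecc (hf.1 v₀)
  have hsub : univ.biUnion (innerBall G f) ⊆ univ.erase b := fun w hw => by
    obtain ⟨v, -, hwv⟩ := mem_biUnion.mp hw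
    exact mem_erase.mpr ⟨fun hwb => hf.notMem_innerBall (Nat.pos_of_ne_zero hv₀) hb v
      (hwb ▸ hwv), mem_univ w⟩
  calc bweight f ≤ ∑ v, #(innerBall G f v) := sum_le_sum fun v _ => le_card_innerBall hf.1 v
    _ = #(univ.biUnion (innerBall G f)) :=
      (card_biUnion fun _ _ _ _ hne => hf.disjoint_innerBall hne).symm
    _ ≤ #(univ.erase b) := card_le_card hsub
    _ = Fintype.card V - 1 := by rw [card_erase_of_mem (mem_univ b), card_univ]

lemma BnIndep.of_le (hT : T.Connected) (hle : T ≤ G) (hf : BnIndep G f) : BnIndep T f := by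
  have hdist : ∀ u v, G.dist u v ≤ T.dist u v := fun u v => (hT u v).dist_anti hle
  refine ⟨fun v => (hf.1 v).trans (gecc_le_gecc_of_le hT hle v), fun w v₁ v₂ hne h₁ h₂ => ?_⟩
  have hG := hf.2 w v₁ v₂ hne ⟨h₁.1, (hdist w v₁).trans h₁.2⟩ ⟨h₂.1, (hdist w v₂).trans h₂.2⟩
  exact le_antisymm h₁.2 (hG.symm.le.trans (hdist w v₁))

lemma bnIndep_zero : BnIndep G 0 :=
  ⟨fun _ => Nat.zero_le _, fun _ _ _ _ h => absurd h.1 (lt_irrefl 0)⟩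

lemma bweight_le_alphaBn (hf : BnIndep G f) : bweight f ≤ alphaBn G :=
  le_csSup ⟨Fintype.card V - 1, by rintro _ ⟨g, hg, rfl⟩; exact hg.bweight_le_card_sub_one⟩
    ⟨f, hf, rfl⟩

lemma alphaBn_le {n : ℕ} (h : ∀ f, BnIndep G f → bweight f ≤ n) : alphaBn G ≤ n :=
  csSup_le ⟨0, 0, bnIndep_zero, by simp [bweight]⟩ (by rintro _ ⟨f, hf, rfl⟩; exact h f hf)

lemma alphaBn_le_card_sub_one : alphaBn G ≤ Fintype.card V - 1 :=
  alphaBn_le fun _ hf => hf.bweight_le_card_sub_one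

lemma alphaBn_le_alphaBn_of_le (hT : T.Connected) (hle : T ≤ G) : alphaBn G ≤ alphaBn T :=
  alphaBn_le fun _ hf => bweight_le_alphaBn (hf.of_le hT hle)

end SimpleGraph

theorem stmt3_general {V : Type*} [Fintype V] (G T : SimpleGraph V)
    (hT : T.IsTree) (hle : T ≤ G) :
    alphaBn G ≤ alphaBn T ∧ alphaBn T ≤ Fintype.card V - 1 :=
  ⟨alphaBn_le_alphaBn_of_le hT.connected hle, alphaBn_le_card_sub_one⟩

/-- For any connected graph `G` of order `n` and spanning tree `T` of `G`,
`α_bn(G) ≤ α_bn(T) ≤ n - 1`. -/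
theorem stmt3 {V : Type*} [Fintype V] (G T : SimpleGraph V) (hG : G.Connected)
    (hT : T.IsTree) (hle : T ≤ G) :
    alphaBn G ≤ alphaBn T ∧ alphaBn T ≤ Fintype.card V - 1 :=
  stmt3_general G T hT hle
end
end

section
/- Let f be a maximum-weight bn-independent broadcast on a tree T chosen so that the number of vertices v with f(v)=1 is maximum. Then for every vertex v with f(v) ≥ 2, the f-private boundary PB_f(v) is empty. -/
/-!
Suppose `u ∈ PB_f(v)` with `f v ≥ 2`. Then `d(u, v) = f v` and `u` hears nothing once `f v` is
lowered by one. Lowering `f v` by one and letting `u` broadcast with strength 1 gives a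
bn-independent broadcast of the same weight with one more vertex of strength 1, contradicting
the choice of `f`.
-/

open SimpleGraph Finset
open scoped Classical

noncomputable section

open Function

section Hearing

variable {V : Type*} {G : SimpleGraph V} {f : V → ℕ} {u : V}

theorem eq_zero_of_forall_not_hears (hu : ∀ x, ¬ Hears G f u x) : f u = 0 := by
  by_contra h
  exact hu u ⟨Nat.pos_of_ne_zero h, by simp⟩

theorem hears_update_of_ne {b : V} (hb : b ≠ u) {w : V} {c : ℕ} :
    Hears G (update f u c) w b ↔ Hears G f w b := by
  simp only [Hears, update_of_ne hb]

theorem dist_eq_of_mem_privBoundary {v : V} (hv : 2 ≤ f v) (hu : u ∈ privBoundary G f v) :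
    G.dist u v = f v := by
  have h := hu.2 v
  simp only [Hears, update_self, not_and, not_le] at h
  have := h (by omega)
  have := hu.1
  omega

end Hearing

section Broadcast

variable {V : Type*} [Fintype V] {G : SimpleGraph V} {f g : V → ℕ} {u : V}

theorem bweight_update_add (f : V → ℕ) (a : V) (c : ℕ) :
    bweight (update f a c) + f a = bweight f + c := by
  unfold bweight
  rw [Finset.sum_update_of_mem (Finset.mem_univ a),
    Finset.sum_eq_add_sum_sdiff_singleton_of_mem (Finset.mem_univ a) f]
  ring

theorem one_le_gecc [Nontrivial V] (hG : G.Connected) (u : V) : 1 ≤ gecc G u := by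
  obtain ⟨x, hx⟩ := exists_ne u
  exact (hG.pos_dist_of_ne hx.symm).trans_le (Finset.le_sup (f := G.dist u) (Finset.mem_univ x))

theorem BnIndep.mono (hf : BnIndep G f) (hgf : g ≤ f) : BnIndep G g := by
  refine ⟨fun x => (hgf x).trans (hf.1 x), fun w a b hab ha hb => ?_⟩
  have hfa := hf.2 w a b hab ⟨ha.1.trans_le (hgf a), ha.2.trans (hgf a)⟩
    ⟨hb.1.trans_le (hgf b), hb.2.trans (hgf b)⟩
  exact le_antisymm ha.2 (hfa ▸ hgf a)

/- Any other vertex `w` hearing `u` is a neighbour of `u`, hence lies on the boundary of every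
`x` it hears, since `f x < d(u, x) ≤ 1 + d(w, x)`. -/
theorem BnIndep.update_one_of_forall_not_hears [Nontrivial V] (hG : G.Connected)
    (hf : BnIndep G f) (hu : ∀ x, ¬ Hears G f u x) : BnIndep G (update f u 1) := by
  have hne : ∀ {w b}, b ≠ u → Hears G (update f u 1) w b → w ≠ u := by
    rintro w b hb hwb rfl
    exact hu b ((hears_update_of_ne hb).1 hwb)
  have hdist_u : ∀ {w b}, b ≠ u → Hears G (update f u 1) w b → Hears G (update f u 1) w u →
      G.dist w u = 1 := by
    intro w b hb hwb hwu
    have := hG.pos_dist_of_ne (hne hb hwb)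
    have := hwu.2
    simp only [update_self] at this
    omega
  refine ⟨fun x => ?_, fun w a b hab ha hb => ?_⟩
  · rcases eq_or_ne x u with rfl | hx
    · simpa using one_le_gecc hG x
    · simpa [update_of_ne hx] using hf.1 x
  rcases eq_or_ne a u with rfl | hau
  · simpa using hdist_u (Ne.symm hab) hb ha
  rw [update_of_ne hau]
  have hfa := (hears_update_of_ne hau).1 ha
  rcases eq_or_ne b u with hbu | hbu
  · have hwu := hdist_u hau ha (hbu ▸ hb)
    have hsilent : f a < G.dist u a := not_le.1 fun h => hu a ⟨hfa.1, h⟩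
    have htri : G.dist u a ≤ G.dist u w + G.dist w a := hG.dist_triangle
    have huw : G.dist u w = 1 := G.dist_comm.trans hwu
    exact le_antisymm hfa.2 (by omega)
  · exact hf.2 w a b hab hfa ((hears_update_of_ne hbu).1 hb)

theorem bweight_update_sub_one_update_one {v : V} (hfu : f u = 0) (huv : u ≠ v)
    (hfv : 0 < f v) : bweight (update (update f v (f v - 1)) u 1) = bweight f := by
  have hg := bweight_update_add (update f v (f v - 1)) u 1
  have hh := bweight_update_add f v (f v - 1)
  rw [update_of_ne huv, hfu] at hg
  omega

theorem card_filter_eq_one_lt_update_update {v : V} (hfu : f u ≠ 1) (hfv : f v ≠ 1) (c : ℕ) :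
    #{x | f x = 1} < #{x | update (update f v c) u 1 x = 1} := by
  refine Finset.card_lt_card (Finset.ssubset_iff.2 ⟨u, by simp [hfu], fun x hx => ?_⟩)
  rcases Finset.mem_insert.1 hx with rfl | hx
  · simp
  · have hx1 := (Finset.mem_filter.1 hx).2
    have hxu : x ≠ u := by rintro rfl; exact hfu hx1
    have hxv : x ≠ v := by rintro rfl; exact hfv hx1
    simp [update_of_ne hxu, update_of_ne hxv, hx1]

end Broadcast

/-- If `f` is a maximum-weight bn-independent broadcast on a tree maximizing the
number of vertices with `f v = 1`, then `PB_f(v) = ∅` for all `v` with `f v ≥ 2`. -/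
theorem stmt8 {V : Type*} [Fintype V] (T : SimpleGraph V) (hT : T.IsTree)
    (f : V → ℕ) (hf : BnIndep T f) (hmax : bweight f = alphaBn T)
    (hone : ∀ g : V → ℕ, BnIndep T g → bweight g = alphaBn T →
      (Finset.univ.filter fun v => g v = 1).card ≤
        (Finset.univ.filter fun v => f v = 1).card) :
    ∀ v, 2 ≤ f v → privBoundary T f v = ∅ := by
  intro v hv
  refine Set.eq_empty_iff_forall_notMem.2 fun u hu => ?_
  have huv : u ≠ v := by
    rintro rfl
    have := dist_eq_of_mem_privBoundary hv hu
    simp only [dist_self] at this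
    omega
  have hfu : f u = 0 := by
    simpa [update_of_ne huv] using eq_zero_of_forall_not_hears hu.2
  have : Nontrivial V := ⟨u, v, huv⟩
  have hlower : update f v (f v - 1) ≤ f := fun x => by
    by_cases hx : x = v <;> simp [hx]
  have hg := (hf.mono hlower).update_one_of_forall_not_hears hT.connected hu.2
  have hweight := bweight_update_sub_one_update_one hfu huv (by omega)
  have hcard := card_filter_eq_one_lt_update_update (by omega : f u ≠ 1) (by omega : f v ≠ 1)
    (f v - 1)
  exact absurd (hone _ hg (hweight.trans hmax)) (not_le.2 hcard)
end
end

section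
/- Let f be a maximum-weight bn-independent broadcast on a tree T such that a leaf l f-dominates a branch vertex w. If l′ is a leaf in L(w) that does not hear f from l, then f(l′) > 0, the l′–w path Q contains a vertex b with d(l,b)=f(l), and f(l′) = d(b,l′). -/
open SimpleGraph Finset
open scoped Classical

noncomputable section

/-
Let `q` be the endpath from `w` to `l'` and `b = q_k` the vertex of `q` at distance `f l` from
`l`. As the inner vertices of `q` have degree 2, every vertex `y` off `q` satisfies
`d(y, q_i) = d(y, w) + i`. The vertices `q_0, …, q_k` hear `l`, so they do not broadcast, and `b`,
lying on the boundary of the broadcast from `l`, lies in the interior of no broadcast; in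
particular `f l' ≤ d(b, l')`. Conversely, replacing all broadcasts of `f` on `q` by a single
broadcast of strength `d(b, l')` from `l'` keeps bn-independence (only `b` hears `l'` together with
another vertex), whereas the broadcasts of `f` from `q_{k+1}, …, l'` occupy disjoint stretches of
`q` and so have total strength less than `d(b, l')` unless `f l' = d(b, l')`. Maximality of `f`
forces equality.
-/

theorem Nat.sum_le_sub_of_separated {S : Finset ℕ} {r : ℕ → ℕ} {k n : ℕ}
    (hn : ∀ j ∈ S, j ≤ n) (hk : ∀ j ∈ S, r j + k ≤ j)
    (hsep : ∀ i ∈ S, ∀ j ∈ S, i < j → r j + i < j) :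
    ∑ j ∈ S, r j ≤ n - k := by
  -- the intervals `(j - r j, j]` with `j ∈ S` are disjoint subintervals of `(k, n]`
  induction S using Finset.induction_on_max generalizing n with
  | empty => simp
  | insert a S hlt ih =>
    have hbelow : ∀ x ∈ S, x ≤ a - r a - 1 := fun x hx =>
      have := hsep x (mem_insert_of_mem hx) a (mem_insert_self a S) (hlt x hx)
      by omega
    have hS := ih hbelow (fun j hj => hk j (mem_insert_of_mem hj))
      (fun i hi j hj => hsep i (mem_insert_of_mem hi) j (mem_insert_of_mem hj))
    have ha := hk a (mem_insert_self a S)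
    have han := hn a (mem_insert_self a S)
    rw [sum_insert fun haS => (hlt a haS).false]
    omega

theorem Nat.sum_lt_sub_of_separated {S : Finset ℕ} {r : ℕ → ℕ} {k n : ℕ}
    (hn : ∀ j ∈ S, j ≤ n) (hk : ∀ j ∈ S, r j + k ≤ j)
    (hsep : ∀ i ∈ S, ∀ j ∈ S, i < j → r j + i < j) (hkn : k < n)
    (hlast : n ∈ S → r n + k < n) :
    ∑ j ∈ S, r j < n - k := by
  by_cases hnS : n ∈ S
  · have hbelow : ∀ j ∈ S.erase n, j ≤ n - r n - 1 := fun j hj =>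
      have := hsep j (mem_of_mem_erase hj) n hnS (lt_of_le_of_ne (hn j (mem_of_mem_erase hj))
        (ne_of_mem_erase hj))
      by omega
    have hrest := Nat.sum_le_sub_of_separated hbelow (fun j hj => hk j (mem_of_mem_erase hj))
      (fun i hi j hj => hsep i (mem_of_mem_erase hi) j (mem_of_mem_erase hj))
    have := hlast hnS
    rw [← add_sum_erase S r hnS]
    omega
  · have hbelow : ∀ j ∈ S, j ≤ n - 1 := fun j hj =>
      have := hn j hj
      have : j ≠ n := fun h => hnS (h ▸ hj)
      by omega
    have := Nat.sum_le_sub_of_separated hbelow hk hsep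
    omega

namespace SimpleGraph

variable {V : Type*} {G : SimpleGraph V}

lemma Connected.exists_adj_dist_add_one (hG : G.Connected) {y v : V} (hyv : y ≠ v) :
    ∃ z, G.Adj z v ∧ G.dist y z + 1 = G.dist y v := by
  obtain ⟨p, hp⟩ := hG.exists_walk_length_eq_dist y v
  have hnil : ¬ p.Nil := fun h => hyv h.eq
  have hadj := p.adj_penultimate hnil
  refine ⟨p.penultimate, hadj, le_antisymm ?_ ?_⟩
  · have hlen : 0 < p.length := Walk.not_nil_iff_lt_length.mp hnil
    have := dist_le p.dropLast
    simp only [Walk.dropLast, Walk.take_length] at this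
    omega
  · have := hG.dist_triangle (u := y) (v := p.penultimate) (w := v)
    rwa [dist_eq_one_iff_adj.mpr hadj] at this

lemma Walk.dist_getVert_le_sub {u v : V} (q : G.Walk u v) {i j : ℕ} (hij : i ≤ j) :
    G.dist (q.getVert i) (q.getVert j) ≤ j - i := by
  have := dist_le ((q.drop i).take (j - i))
  simp only [Walk.take_length, Walk.drop_length, Walk.drop_getVert,
    Nat.add_sub_cancel' hij] at this
  omega

lemma mem_of_adj_of_degree_le_card [Fintype V] {v x : V} {s : Finset V}
    (hs : ∀ y ∈ s, G.Adj v y) (hdeg : G.degree v ≤ s.card) (hx : G.Adj v x) : x ∈ s := by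
  have hsub : s ⊆ G.neighborFinset v := fun y hy => (G.mem_neighborFinset v y).mpr (hs y hy)
  have := eq_of_subset_of_card_le hsub (by rwa [card_neighborFinset_eq_degree])
  exact this ▸ (G.mem_neighborFinset v x).mpr hx

lemma Walk.IsPath.sum_support_toFinset {M : Type*} [AddCommMonoid M] {u v : V}
    {q : G.Walk u v} (hq : q.IsPath) (f : V → M) :
    ∑ x ∈ q.support.toFinset, f x = ∑ i ∈ range (q.length + 1), f (q.getVert i) := by
  have hsupp : q.support.toFinset = (range (q.length + 1)).image q.getVert := by
    ext x
    simp only [List.mem_toFinset, Walk.mem_support_iff_exists_getVert, mem_image, mem_range,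
      Nat.lt_succ_iff]
    exact ⟨fun ⟨i, h, hi⟩ => ⟨i, hi, h⟩, fun ⟨i, hi, h⟩ => ⟨i, h, hi⟩⟩
  rw [hsupp, sum_image]
  intro i hi j hj h
  exact hq.getVert_injOn (by simpa [Nat.lt_succ_iff] using hi)
    (by simpa [Nat.lt_succ_iff] using hj) h

section Broadcast

variable {f : V → ℕ}

lemma BnIndep.eq_zero_of_hears [Fintype V] (hf : BnIndep G f) {u x : V} (hux : u ≠ x)
    (h : Hears G f u x) : f u = 0 := by
  by_contra hu
  have := hf.2 u u x hux ⟨Nat.pos_of_ne_zero hu, by simp⟩ h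
  simp only [dist_self] at this
  omega

lemma BnIndep.le_dist_of_hears_of_dist_eq [Fintype V] (hf : BnIndep G f) {u l : V}
    (h : Hears G f u l) (hd : G.dist u l = f l) (x : V) : f x ≤ G.dist u x := by
  by_contra! hx
  have hxl : x ≠ l := by rintro rfl; omega
  have := hf.2 u x l hxl ⟨by omega, hx.le⟩ h
  omega

lemma bweight_le_alphaBn_s9 [Fintype V] {g : V → ℕ} (hg : BnIndep G g) :
    bweight g ≤ alphaBn G := by
  refine le_csSup ⟨∑ v, gecc G v, ?_⟩ ⟨g, hg, rfl⟩
  rintro _ ⟨g', hg', rfl⟩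
  exact sum_le_sum fun v _ => hg'.1 v

def reassign (f : V → ℕ) (A : Finset V) (v : V) (s : ℕ) : V → ℕ :=
  fun x => if x = v then s else if x ∈ A then 0 else f x

lemma reassign_of_notMem {A : Finset V} {v x : V} (hv : v ∈ A) (hx : x ∉ A) (s : ℕ) :
    reassign f A v s x = f x := by
  simp [reassign, ne_of_mem_of_not_mem hv hx |>.symm, hx]

lemma hears_reassign {A : Finset V} {v u x : V} {s : ℕ} (hxv : x ≠ v)
    (h : Hears G (reassign f A v s) u x) : x ∉ A ∧ Hears G f u x := by
  by_cases hxA : x ∈ A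
  · simp [Hears, reassign, hxv, hxA] at h
  · simpa [Hears, reassign, hxv, hxA] using h

lemma bnIndep_reassign [Fintype V] (hf : BnIndep G f) {A : Finset V} {v : V} (hv : v ∈ A)
    {s : ℕ} (hs : s ≤ gecc G v)
    (hbd : ∀ u x, x ∉ A → Hears G f u x → G.dist u v ≤ s →
      G.dist u v = s ∧ G.dist u x = f x) :
    BnIndep G (reassign f A v s) := by
  have hgv : reassign f A v s v = s := by simp [reassign]
  refine ⟨fun x => ?_, fun u v₁ v₂ hne h₁ h₂ => ?_⟩
  · by_cases hxv : x = v
    · rwa [hxv, hgv]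
    · by_cases hxA : x ∈ A <;> simp [reassign, hxv, hxA, hf.1 x]
  · by_cases hv₁ : v₁ = v <;> by_cases hv₂ : v₂ = v
    · exact absurd (hv₁.trans hv₂.symm) hne
    · obtain ⟨hA, h₂⟩ := hears_reassign hv₂ h₂
      have h₁v := h₁.2
      rw [hv₁, hgv] at h₁v ⊢
      exact (hbd u v₂ hA h₂ h₁v).1
    · obtain ⟨hA, h₁⟩ := hears_reassign hv₁ h₁
      have h₂v := h₂.2
      rw [hv₂, hgv] at h₂v
      rw [reassign_of_notMem hv hA]
      exact (hbd u v₁ hA h₁ h₂v).2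
    · obtain ⟨hA, h₁⟩ := hears_reassign hv₁ h₁
      obtain ⟨-, h₂⟩ := hears_reassign hv₂ h₂
      rw [reassign_of_notMem hv hA]
      exact hf.2 u v₁ v₂ hne h₁ h₂

lemma bweight_reassign [Fintype V] {A : Finset V} {v : V} (hv : v ∈ A) (s : ℕ) :
    bweight (reassign f A v s) + ∑ x ∈ A, f x = bweight f + s := by
  have hin : ∑ x ∈ A, reassign f A v s x = s := by
    rw [sum_eq_single_of_mem v hv fun x hx hxv => by simp [reassign, hxv, hx]]
    simp [reassign]
  have hout : ∑ x ∈ univ \ A, reassign f A v s x = ∑ x ∈ univ \ A, f x :=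
    sum_congr rfl fun x hx => reassign_of_notMem hv (mem_sdiff.mp hx).2 s
  unfold bweight
  rw [← sum_sdiff (subset_univ A), ← sum_sdiff (subset_univ A) (f := f), hin, hout]
  ring

end Broadcast

section Endpath

variable [Fintype V] {w l' : V}

structure Walk.IsEndpath_s9 (q : G.Walk w l') : Prop where
  isPath : q.IsPath
  degree_end : G.degree l' = 1
  degree_internal : ∀ u ∈ q.support, u ≠ w → u ≠ l' → G.degree u = 2

lemma exists_isEndpath_of_isEndpathTo (h : IsEndpathTo G w l') :
    ∃ q : G.Walk w l', q.IsEndpath_s9 :=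
  let ⟨hl', q, hq, hdeg⟩ := h
  ⟨q, hq, hl', hdeg⟩

variable {q : G.Walk w l'} {f : V → ℕ} {k : ℕ}

lemma Walk.IsPath.sum_support_lt (hq : q.IsPath) (hf : BnIndep G f)
    (hb : ∀ x, f x ≤ G.dist (q.getVert k) x) (hzero : ∀ j ≤ k, f (q.getVert j) = 0)
    (hk : k < q.length) (hlt : f l' + k < q.length) :
    ∑ x ∈ q.support.toFinset, f x < q.length - k := by
  have hsplit : ∑ j ∈ range (q.length + 1), f (q.getVert j) =
      ∑ j ∈ (Ioc k q.length).filter (fun j => f (q.getVert j) ≠ 0), f (q.getVert j) := by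
    rw [sum_filter_ne_zero]
    refine (sum_subset (fun j hj => ?_) fun j hj hj' => hzero j ?_).symm
    · simp only [mem_Ioc, mem_range] at hj ⊢; omega
    · simp only [mem_Ioc, mem_range, not_and, not_le] at hj hj'; omega
  rw [hq.sum_support_toFinset, hsplit]
  refine Nat.sum_lt_sub_of_separated (fun j hj => ?_) (fun j hj => ?_) (fun i hi j hj hij => ?_) hk
    fun _ => by rwa [q.getVert_length]
  · exact (mem_Ioc.mp (mem_filter.mp hj).1).2
  · have hkj := (mem_Ioc.mp (mem_filter.mp hj).1).1
    have := (hb _).trans (q.dist_getVert_le_sub hkj.le)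
    omega
  · simp only [mem_filter, mem_Ioc] at hi hj
    by_contra! hji
    have hne : q.getVert i ≠ q.getVert j := fun h => by
      have := hq.getVert_injOn (by simp; omega) (by simp; omega) h
      omega
    have := q.dist_getVert_le_sub hij.le
    exact hi.2 (hf.eq_zero_of_hears hne ⟨Nat.pos_of_ne_zero hj.2, by omega⟩)

namespace Walk.IsEndpath_s9

lemma dist_getVert_succ (hG : G.Connected) (hq : q.IsEndpath_s9) {y : V} (hy : y ∉ q.support)
    {i : ℕ} (hi : i < q.length) :
    G.dist y (q.getVert (i + 1)) = G.dist y (q.getVert i) + 1 := by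
  -- downward induction from the leaf: the neighbour of `q_{i+1}` nearer to `y` is not `q_{i+2}`
  obtain ⟨m, hm⟩ : ∃ m, q.length = i + 1 + m := ⟨q.length - (i + 1), by omega⟩
  induction m generalizing i with
  | zero =>
    have hend : q.getVert (i + 1) = l' := by rw [← hm, q.getVert_length]
    obtain ⟨z, hz, hdz⟩ := hG.exists_adj_dist_add_one (y := y) (v := l') (by
      rintro rfl; exact hy q.end_mem_support)
    have hzi : z ∈ ({q.getVert i} : Finset V) := by
      refine mem_of_adj_of_degree_le_card (v := l') ?_ (by simp [hq.degree_end]) hz.symm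
      simpa [← hend] using (q.adj_getVert_succ hi).symm
    rw [mem_singleton.mp hzi] at hdz
    rw [hend, ← hdz]
  | succ m ih =>
    have hnext : G.dist y (q.getVert (i + 2)) = G.dist y (q.getVert (i + 1)) + 1 :=
      ih (by omega) (by omega)
    have hv2 : G.degree (q.getVert (i + 1)) = 2 := by
      refine hq.degree_internal _ (q.getVert_mem_support _) ?_ ?_
      · simp [hq.isPath.getVert_eq_start_iff (by omega : i + 1 ≤ q.length)]
      · simp [hq.isPath.getVert_eq_end_iff (by omega : i + 1 ≤ q.length)]
        omega
    have hne : q.getVert i ≠ q.getVert (i + 2) := fun h => by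
      have := hq.isPath.getVert_injOn (by simp; omega) (by simp; omega) h
      omega
    obtain ⟨z, hz, hdz⟩ := hG.exists_adj_dist_add_one (y := y) (v := q.getVert (i + 1)) (by
      rintro rfl; exact hy (q.getVert_mem_support _))
    have hz2 : z ∈ ({q.getVert i, q.getVert (i + 2)} : Finset V) := by
      refine mem_of_adj_of_degree_le_card ?_ (by rw [hv2, card_pair hne]) hz.symm
      simp only [mem_insert, mem_singleton, forall_eq_or_imp, forall_eq]
      exact ⟨(q.adj_getVert_succ hi).symm, q.adj_getVert_succ (by omega)⟩
    rcases mem_insert.mp hz2 with rfl | hz2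
    · exact hdz.symm
    · rw [mem_singleton.mp hz2] at hdz
      omega

lemma dist_getVert (hG : G.Connected) (hq : q.IsEndpath_s9) {y : V} (hy : y ∉ q.support)
    {i : ℕ} (hi : i ≤ q.length) :
    G.dist y (q.getVert i) = G.dist y w + i := by
  induction i with
  | zero => simp
  | succ i ih => rw [hq.dist_getVert_succ hG hy (by omega), ih (by omega), add_assoc]

lemma dist_getVert_end (hG : G.Connected) (hq : q.IsEndpath_s9) {y : V} (hy : y ∉ q.support)
    {i : ℕ} (hi : i ≤ q.length) :
    G.dist (q.getVert i) l' = q.length - i := by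
  have hle := q.getVert_length ▸ q.dist_getVert_le_sub hi
  have htri := hG.dist_triangle (u := y) (v := q.getVert i) (w := l')
  have hyl' := q.getVert_length ▸ hq.dist_getVert hG hy le_rfl
  rw [hyl', hq.dist_getVert hG hy hi] at htri
  omega


lemma eq_getVert_of_hears (hG : G.Connected) (hq : q.IsEndpath_s9)
    (hb : ∀ x, f x ≤ G.dist (q.getVert k) x) (hk : k ≤ q.length) {u x : V}
    (hx : x ∉ q.support) (hux : Hears G f u x) (hul' : G.dist u l' ≤ q.length - k) :
    u = q.getVert k := by
  have hu : u ∈ q.support := by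
    by_contra hu
    have hul := q.getVert_length ▸ hq.dist_getVert hG hu le_rfl
    have := hG.pos_dist_of_ne (u := u) (v := w) (by rintro rfl; exact hu q.start_mem_support)
    omega
  obtain ⟨i, rfl, hi⟩ := Walk.mem_support_iff_exists_getVert.mp hu
  have hki : k ≤ i := by
    have := hq.dist_getVert_end hG hx hi
    omega
  have hxi := hq.dist_getVert hG hx hi
  have hxk := hq.dist_getVert hG hx hk
  rw [dist_comm] at hxi hxk
  have := hux.2.trans (hb x)
  rw [show i = k by omega]

lemma length_sub_le_of_max (hG : G.Connected) (hq : q.IsEndpath_s9) (hf : BnIndep G f)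
    (hmax : bweight f = alphaBn G) (hb : ∀ x, f x ≤ G.dist (q.getVert k) x)
    (hzero : ∀ j ≤ k, f (q.getVert j) = 0) (hk : k < q.length) {y : V} (hy : y ∉ q.support) :
    q.length - k ≤ f l' := by
  by_contra! hlt
  have hl' : l' ∈ q.support.toFinset := List.mem_toFinset.mpr q.end_mem_support
  have hecc : q.length - k ≤ gecc G l' := by
    have hwl' := q.getVert_zero ▸ hq.dist_getVert_end hG hy (Nat.zero_le _)
    have : G.dist l' w ≤ gecc G l' := le_sup (f := fun u => G.dist l' u) (mem_univ w)
    rw [dist_comm] at hwl'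
    omega
  have hg := bnIndep_reassign hf hl' hecc fun u x hx hux hul' => by
    have hx' : x ∉ q.support := fun h => hx (List.mem_toFinset.mpr h)
    obtain rfl := hq.eq_getVert_of_hears hG hb hk.le hx' hux hul'
    exact ⟨hq.dist_getVert_end hG hx' hk.le, le_antisymm hux.2 (hb x)⟩
  have := bweight_reassign (f := f) hl' (q.length - k)
  have := bweight_le_alphaBn_s9 hg
  have := hq.isPath.sum_support_lt hf hb hzero hk (by omega)
  omega

end Walk.IsEndpath_s9

end Endpath

end SimpleGraph

/-- If a leaf `l` `f`-dominates a branch vertex `w` in a maximum-weight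
bn-independent broadcast and `l' ∈ L(w)` does not hear `f` from `l`, then `l'`
broadcasts, the `l'-w` path contains a vertex `b ∈ B_f(l)`, and `f(l') = d(b,l')`. -/
theorem stmt9 {V : Type*} [Fintype V] (T : SimpleGraph V) (hT : T.IsTree)
    (f : V → ℕ) (hf : BnIndep T f) (hmax : bweight f = alphaBn T)
    (l w l' : V) (hl : T.degree l = 1) (hw : 3 ≤ T.degree w)
    (hdom : Hears T f w l) (hl' : l' ∈ leafSet T w) (hnh : ¬ Hears T f l' l) :
    0 < f l' ∧ ∃ p : T.Walk l' w, p.IsPath ∧ ∃ b ∈ p.support,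
      T.dist l b = f l ∧ f l' = T.dist b l' := by
  have hG := hT.connected
  obtain ⟨q, hq⟩ := exists_isEndpath_of_isEndpathTo (mem_filter.mp hl').2
  have hlw : l ≠ w := by rintro rfl; omega
  have hlq : l ∉ q.support := fun h => by
    have := hq.degree_internal l h hlw (by rintro rfl; exact hnh ⟨hdom.1, by simp⟩)
    omega
  have hdl : ∀ i ≤ q.length, T.dist l (q.getVert i) = T.dist l w + i :=
    fun i hi => hq.dist_getVert hG hlq hi
  obtain ⟨k, hk⟩ : ∃ k, T.dist l w + k = f l := ⟨f l - T.dist l w, by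
    have := hdom.2; rw [SimpleGraph.dist_comm] at this; omega⟩
  have hkq : k < q.length := by
    have := q.getVert_length ▸ hdl q.length le_rfl
    have : f l < T.dist l l' := by
      by_contra! h; exact hnh ⟨hdom.1, by rwa [SimpleGraph.dist_comm]⟩
    omega
  have hbl : T.dist l (q.getVert k) = f l := (hdl k hkq.le).trans hk
  have hlb : T.dist (q.getVert k) l = f l := by rw [SimpleGraph.dist_comm, hbl]
  have hb := hf.le_dist_of_hears_of_dist_eq ⟨hdom.1, hlb.le⟩ hlb
  have hzero : ∀ j ≤ k, f (q.getVert j) = 0 := fun j hj =>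
    hf.eq_zero_of_hears (fun h => hlq (by rw [← h]; exact q.getVert_mem_support j))
      ⟨hdom.1, by rw [SimpleGraph.dist_comm, hdl j (by omega)]; omega⟩
  have hbl' := hq.dist_getVert_end hG hlq hkq.le
  have hle : f l' ≤ q.length - k := hbl' ▸ hb l'
  have hge := hq.length_sub_le_of_max hG hf hmax hb hzero hkq hlq
  refine ⟨by omega, q.reverse, hq.isPath.reverse, q.getVert k, ?_, hbl, by omega⟩
  simp
end
end

section
/- If T is a tree with b(T) ≤ 2, then α_bn(T) ≤ n − b(T) + ρ(T), where n is the order of T. -/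
open SimpleGraph Finset
open scoped Classical

noncomputable section

/-!
Let `f` be a bn-independent broadcast on a tree with `n` vertices. The open balls
`{u | d(x, u) < f x}` are pairwise disjoint, and a boundary vertex (`d(x, c) = f x`, `f x > 0`)
lies in none of them. Since `f x ≤ e(x)`, every level `0, …, f x - 1` around `x` is inhabited, and
a branch vertex at depth `≤ f x - 2` has at least two children one level further out, so the ball
of `x` has at least `f x` vertices plus one for each such deep branch vertex.

Call a vertex spare if it meets the open balls only as such a deep branch vertex. Removing the
spare vertices from every ball still leaves `f x` vertices in the ball of `x`, hence
`weight f + #spare ≤ n`. A branch vertex is spare unless it sits at depth exactly `f x - 1` for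
some `x`; in that case its two children lie on the boundary of that ball and are spare. So there
are at least `min (b(T), 2)` spare vertices, which is `b(T)` when `b(T) ≤ 2`.
-/

namespace SimpleGraph

variable {V : Type*} {G : SimpleGraph V}

lemma Reachable.exists_dist_eq {x u : V} (h : G.Reachable x u) {i : ℕ} (hi : i ≤ G.dist x u) :
    ∃ v, G.dist x v = i := by
  obtain ⟨p, hp⟩ := h.exists_walk_length_eq_dist
  refine ⟨p.getVert i, le_antisymm ?_ ?_⟩
  · simpa [Walk.take_length, hp, hi] using G.dist_le (p.take i)
  · have hdrop := G.dist_le (p.drop i)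
    have := (h.trans (p.drop i).reachable.symm).dist_triangle_left (u := x) (v := p.getVert i) u
    rw [Walk.drop_length] at hdrop
    omega

lemma IsTree.eq_of_adj_of_dist_add_one_eq (hG : G.IsTree) {x w y y' : V} (hy : G.Adj w y)
    (hy' : G.Adj w y') (hd : G.dist x y + 1 = G.dist x w) (hd' : G.dist x y' + 1 = G.dist x w) :
    y = y' := by
  obtain ⟨p, hp, -⟩ := hG.connected.exists_path_of_dist x w
  have key : ∀ z, G.Adj w z → G.dist x z + 1 = G.dist x w → z = p.penultimate := by
    intro z hz hdz
    obtain ⟨q, hq, hql⟩ := hG.connected.exists_path_of_dist x z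
    have hw : w ∉ q.support := fun hw => by
      have := (G.dist_le (q.takeUntil w hw)).trans (q.length_takeUntil_le_length hw)
      omega
    exact hG.isAcyclic.eq_penultimate_of_adj_end hp hz
      (hG.isAcyclic.mem_support_of_ne_mem_support_of_adj_of_isPath hp hq hz hw)
  rw [key y hy hd, key y' hy' hd']

variable [Fintype V]

lemma IsTree.two_le_card_farther_neighbors (hG : G.IsTree) (x : V) {w : V}
    (hw : 3 ≤ G.degree w) :
    2 ≤ #{y ∈ G.neighborFinset w | G.dist x y = G.dist x w + 1} := by
  have hcloser : #{y ∈ G.neighborFinset w | G.dist x y + 1 = G.dist x w} ≤ 1 :=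
    card_le_one.mpr fun a ha b hb => by
      simp only [mem_filter, mem_neighborFinset] at ha hb
      exact hG.eq_of_adj_of_dist_add_one_eq ha.1 hb.1 ha.2 hb.2
  have hfarther : {y ∈ G.neighborFinset w | G.dist x y = G.dist x w + 1} =
      {y ∈ G.neighborFinset w | ¬ G.dist x y + 1 = G.dist x w} := by
    refine filter_congr fun y hy => ?_
    have := hG.dist_eq_dist_add_one_of_adj x ((G.mem_neighborFinset w y).mp hy)
    omega
  have := card_filter_add_card_filter_not (s := G.neighborFinset w) (G.dist x · + 1 = G.dist x w)
  rw [card_neighborFinset_eq_degree] at this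
  rw [hfarther]
  omega

lemma IsTree.card_branch_add_one_le_card_sphere (hG : G.IsTree) {x u : V} {k : ℕ}
    (hk : k ≤ G.dist x u) :
    #{w | 3 ≤ G.degree w ∧ G.dist x w + 1 = k} + 1 ≤ #{v | G.dist x v = k} := by
  have hchildren := card_mul_le_card_mul (r := G.Adj) (m := 2) (n := 1)
    (s := {w | 3 ≤ G.degree w ∧ G.dist x w + 1 = k}) (t := {v | G.dist x v = k})
    (fun w hw => by
      simp only [mem_filter, mem_univ, true_and] at hw
      refine (hG.two_le_card_farther_neighbors x hw.1).trans (card_le_card fun y hy => ?_)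
      simp only [mem_filter, mem_neighborFinset] at hy
      simp only [bipartiteAbove, mem_filter, mem_univ, true_and]
      exact ⟨by omega, hy.1⟩)
    (fun v hv => card_le_one.mpr fun a ha b hb => by
      simp only [bipartiteBelow, mem_filter, mem_univ, true_and] at ha hb hv
      exact hG.eq_of_adj_of_dist_add_one_eq (x := x) ha.2.symm hb.2.symm (by omega) (by omega))
  obtain ⟨v, hv⟩ := (hG.connected x u).exists_dist_eq hk
  have hlevel : 0 < #{v | G.dist x v = k} := card_pos.mpr ⟨v, by simpa using hv⟩
  omega

lemma IsTree.add_card_branch_le_card_ball (hG : G.IsTree) {x u : V} {k : ℕ} (hk : k ≤ G.dist x u) :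
    k + #{w | 3 ≤ G.degree w ∧ G.dist x w + 2 ≤ k} ≤ #{v | G.dist x v < k} := by
  induction k with
  | zero => simp
  | succ k ih =>
    have hball : #{v | G.dist x v < k + 1} = #{v | G.dist x v < k} + #{v | G.dist x v = k} := by
      rw [← card_union_of_disjoint (disjoint_filter.mpr fun _ _ h => h.ne)]
      congr 1
      ext v
      simp only [mem_filter, mem_univ, true_and, mem_union]
      omega
    have hbranch : #{w | 3 ≤ G.degree w ∧ G.dist x w + 2 ≤ k + 1} ≤
        #{w | 3 ≤ G.degree w ∧ G.dist x w + 2 ≤ k} + #{w | 3 ≤ G.degree w ∧ G.dist x w + 1 = k} :=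
      (card_le_card fun w hw => by
        simp only [mem_filter, mem_univ, true_and, mem_union] at hw ⊢
        omega).trans (card_union_le _ _)
    have := hG.card_branch_add_one_le_card_sphere (x := x) (u := u) (k := k) (by omega)
    have := ih (by omega)
    omega

end SimpleGraph

section Broadcast

variable {V : Type*} [Fintype V] {T : SimpleGraph V} {f : V → ℕ}

lemma exists_le_dist_of_le_gecc {v : V} {k : ℕ} (h : k ≤ gecc T v) : ∃ u, k ≤ T.dist v u := by
  obtain ⟨u, -, hu⟩ := exists_mem_eq_sup univ ⟨v, mem_univ v⟩ (T.dist v)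
  rw [gecc, hu] at h
  exact ⟨u, h⟩

def broadcastBall (T : SimpleGraph V) (f : V → ℕ) (x : V) : Finset V :=
  {u | T.dist x u < f x}

lemma mem_broadcastBall {x u : V} : u ∈ broadcastBall T f x ↔ T.dist x u < f x := by
  simp [broadcastBall]

lemma BnIndep.disjoint_broadcastBall (hf : BnIndep T f) {x y : V} (hxy : x ≠ y) :
    Disjoint (broadcastBall T f x) (broadcastBall T f y) := by
  refine disjoint_filter.mpr fun u _ hx hy => ?_
  have := hf.2 u x y hxy ⟨by omega, by rw [dist_comm]; omega⟩ ⟨by omega, by rw [dist_comm]; omega⟩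
  rw [dist_comm] at this
  omega

lemma BnIndep.le_dist_of_dist_eq (hf : BnIndep T f) {x c : V} (hx : 0 < f x)
    (hc : T.dist x c = f x) (y : V) : f y ≤ T.dist y c := by
  by_contra! h
  obtain rfl | hyx := eq_or_ne y x
  · omega
  have := hf.2 c y x hyx ⟨by omega, by rw [dist_comm]; omega⟩ ⟨hx, by rw [dist_comm]; omega⟩
  rw [dist_comm] at this
  omega

def spareSet (T : SimpleGraph V) (f : V → ℕ) : Finset V :=
  {c | ∀ x, T.dist x c < f x → 3 ≤ T.degree c ∧ T.dist x c + 2 ≤ f x}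

lemma SimpleGraph.IsTree.le_card_broadcastBall_sdiff_spareSet (hT : T.IsTree)
    (hf : IsBroadcast T f) (x : V) : f x ≤ #(broadcastBall T f x \ spareSet T f) := by
  obtain ⟨u, hu⟩ := exists_le_dist_of_le_gecc (hf x)
  have hsurplus : broadcastBall T f x ∩ spareSet T f ⊆
      ({w | 3 ≤ T.degree w ∧ T.dist x w + 2 ≤ f x} : Finset V) := fun w hw => by
    simp only [spareSet, mem_inter, mem_broadcastBall, mem_filter, mem_univ, true_and] at hw ⊢
    exact hw.2 x hw.1
  have := card_le_card hsurplus
  have := card_sdiff_add_card_inter (broadcastBall T f x) (spareSet T f)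
  have : f x + _ ≤ #(broadcastBall T f x) := hT.add_card_branch_le_card_ball hu
  omega

lemma BnIndep.bweight_add_card_spareSet_le (hf : BnIndep T f) (hT : T.IsTree) :
    bweight f + #(spareSet T f) ≤ Fintype.card V := by
  have hdisj : ((univ : Finset V) : Set V).PairwiseDisjoint
      fun x => broadcastBall T f x \ spareSet T f :=
    fun x _ y _ hxy => (hf.disjoint_broadcastBall hxy).mono sdiff_subset sdiff_subset
  calc bweight f + #(spareSet T f)
      ≤ ∑ x, #(broadcastBall T f x \ spareSet T f) + #(spareSet T f) :=
        add_le_add_left (sum_le_sum fun x _ => hT.le_card_broadcastBall_sdiff_spareSet hf.1 x) _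
    _ = #(univ.biUnion fun x => broadcastBall T f x \ spareSet T f) + #(spareSet T f) := by
        rw [card_biUnion hdisj]
    _ ≤ #(spareSet T f)ᶜ + #(spareSet T f) := by
        gcongr
        exact biUnion_subset.mpr fun x _ => fun u hu => mem_compl.mpr (mem_sdiff.mp hu).2
    _ = Fintype.card V := card_compl_add_card _

lemma mem_spareSet_of_forall_dist_add_one_ne {w : V} (hw : 3 ≤ T.degree w)
    (h : ∀ x, T.dist x w + 1 ≠ f x) : w ∈ spareSet T f := by
  simp only [spareSet, mem_filter, mem_univ, true_and]
  exact fun x hx => ⟨hw, by have := h x; omega⟩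

lemma BnIndep.two_le_card_spareSet (hf : BnIndep T f) (hT : T.IsTree) {x w : V}
    (hw : 3 ≤ T.degree w) (hd : T.dist x w + 1 = f x) : 2 ≤ #(spareSet T f) := by
  refine (hT.two_le_card_farther_neighbors x hw).trans (card_le_card fun c hc => ?_)
  simp only [mem_filter] at hc
  simp only [spareSet, mem_filter, mem_univ, true_and]
  intro y hy
  have := hf.le_dist_of_dist_eq (x := x) (c := c) (by omega) (by omega) y
  omega

lemma BnIndep.card_branchSet_le_card_spareSet (hf : BnIndep T f) (hT : T.IsTree)
    (hb : #(branchSet T) ≤ 2) : #(branchSet T) ≤ #(spareSet T f) := by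
  by_cases h : ∃ x w, 3 ≤ T.degree w ∧ T.dist x w + 1 = f x
  · obtain ⟨x, w, hw, hd⟩ := h
    exact hb.trans (hf.two_le_card_spareSet hT hw hd)
  · push Not at h
    refine card_le_card fun w hw => ?_
    have hw : 3 ≤ T.degree w := by simpa [branchSet] using hw
    exact mem_spareSet_of_forall_dist_add_one_ne hw fun x => h x w hw

end Broadcast

/-- If `T` is a tree with `b(T) ≤ 2`, then `α_bn(T) ≤ n - b(T) + ρ(T)`. -/
theorem stmt12 {V : Type*} [Fintype V] (T : SimpleGraph V) (hT : T.IsTree)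
    (hb : (branchSet T).card ≤ 2) :
    alphaBn T ≤ Fintype.card V - (branchSet T).card + (rset T).card := by
  refine csSup_le' ?_
  rintro _ ⟨f, hf, rfl⟩
  have := hf.bweight_add_card_spareSet_le hT
  have := hf.card_branchSet_le_card_spareSet hT hb
  omega
end
end

section
/- For every graph G, α_bn(G) ≤ α_h(G), where α_h(G) is the maximum weight of a hearing independent broadcast. -/
open SimpleGraph Finset
open scoped Classical

noncomputable section

theorem hears_self {V : Type*} {G : SimpleGraph V} {f : V → ℕ} {u : V} (hu : 0 < f u) :
    Hears G f u u :=
  ⟨hu, by rw [SimpleGraph.dist_self]; exact Nat.zero_le _⟩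

/-- A broadcasting vertex hears itself, so if it also heard another broadcasting vertex it would
have to lie on its own boundary, i.e. `f u = d(u, u) = 0`. -/
theorem BnIndep.hIndep {V : Type*} [Fintype V] {G : SimpleGraph V} {f : V → ℕ}
    (hf : BnIndep G f) : HIndep G f := by
  refine ⟨hf.1, fun u v huv hu hv => ?_⟩
  by_contra! hheard
  have hboundary := hf.2 u u v huv (hears_self hu) ⟨hv, hheard⟩
  rw [SimpleGraph.dist_self] at hboundary
  omega

theorem bweight_le_sum_gecc {V : Type*} [Fintype V] {G : SimpleGraph V} {f : V → ℕ}
    (hf : IsBroadcast G f) : bweight f ≤ ∑ v, gecc G v :=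
  Finset.sum_le_sum fun v _ => hf v

theorem bnIndep_zero {V : Type*} [Fintype V] (G : SimpleGraph V) : BnIndep G 0 :=
  ⟨fun _ => Nat.zero_le _, fun _ _ _ _ h _ => absurd h.1 (lt_irrefl 0)⟩

/-- For every graph `G`, `α_bn(G) ≤ α_h(G)`. -/
theorem stmt15 {V : Type*} [Fintype V] (G : SimpleGraph V) :
    alphaBn G ≤ alphaH G := by
  have hbdd : BddAbove {w | ∃ f, HIndep G f ∧ bweight f = w} := by
    refine ⟨∑ v, gecc G v, ?_⟩
    rintro w ⟨f, hf, rfl⟩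
    exact bweight_le_sum_gecc hf.1
  have hne : {w | ∃ f, BnIndep G f ∧ bweight f = w}.Nonempty := ⟨_, 0, bnIndep_zero G, rfl⟩
  refine csSup_le_csSup hbdd hne ?_
  rintro w ⟨f, hf, rfl⟩
  exact ⟨f, hf.hIndep, rfl⟩
end
end
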